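/- Under the D1Q2 scheme with s ∈ (0,1], λ ≥ M, and equilibrium initial data with finite TV, the total variation in time is controlled: for all n ≥ 1, ∑_{j∈ℤ} (|f⁺_j^{n+1} − f⁺_j^n| + |f⁻_j^{n+1} − f⁻_j^n|) ≤ ∑_{j∈ℤ} (|f⁺_j^n − f⁺_j^{n−1}| + |f⁻_j^n − f⁻_j^{n−1}|), and moreover ∑_{j∈ℤ} (|f⁺_j^{n+1} − f⁺_j^n| + |f⁻_j^{n+1} − f⁻_j^n|) ≤ 2 TV(u^0). -/

import Mathlib

/-!
Since `|φ'| ≤ λ`, the equilibria `h^±` are nondecreasing on `[α, β]` and split increments exactly: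
`|h⁺(a) - h⁺(b)| + |h⁻(a) - h⁻(b)| = |a - b|`. Monotonicity keeps `f^±` between `h^±(α)` and
`h^±(β)`, hence `u` in `[α, β]`. Each new increment of `f^±` is a convex combination of a
transported old increment of `f^±` and an increment of `h^±(u)`; after summing over `j` the
transport disappears, and the `h^±` increments add up to `|Δu| ≤ |Δf⁺| + |Δf⁻|`. So the time
variation is nonincreasing, and at `n = 0` the increments of `f^±` are increments of `h^±(u⁰)`
in space, each summing to at most `TV(u⁰)`.
-/

/-- Equilibrium distribution function for velocity `+λ`. -/
noncomputable def hp (lam : ℝ) (flux : ℝ → ℝ) (ξ : ℝ) : ℝ := (lam * ξ + flux ξ) / (2 * lam)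

/-- Equilibrium distribution function for velocity `-λ`. -/
noncomputable def hm (lam : ℝ) (flux : ℝ → ℝ) (ξ : ℝ) : ℝ := (lam * ξ - flux ξ) / (2 * lam)

/-- Sequential total variation of a sequence indexed by `ℤ`. -/
noncomputable def tvSeq (w : ℤ → ℝ) : ENNReal := ∑' j : ℤ, ENNReal.ofReal |w (j + 1) - w j|

open Set

lemma abs_add_add_abs_sub_of_abs_le {x e : ℝ} (h : |e| ≤ |x|) :
    |x + e| + |x - e| = 2 * |x| := by
  obtain ⟨h₁, h₂⟩ := abs_le.mp h
  rcases le_total 0 x with hx | hx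
  · rw [abs_of_nonneg hx] at h₁ h₂ ⊢
    rw [abs_of_nonneg (by linarith), abs_of_nonneg (by linarith)]
    ring
  · rw [abs_of_nonpos hx] at h₁ h₂ ⊢
    rw [abs_of_nonpos (by linarith), abs_of_nonpos (by linarith)]
    ring

lemma abs_convexCombo_sub_le {s : ℝ} (hs0 : 0 ≤ s) (hs1 : s ≤ 1) (a a' b b' : ℝ) :
    |((1 - s) * a + s * b) - ((1 - s) * a' + s * b')| ≤ (1 - s) * |a - a'| + s * |b - b'| := by
  calc |((1 - s) * a + s * b) - ((1 - s) * a' + s * b')|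
      = |(1 - s) * (a - a') + s * (b - b')| := by ring_nf
    _ ≤ |(1 - s) * (a - a')| + |s * (b - b')| := abs_add_le _ _
    _ = (1 - s) * |a - a'| + s * |b - b'| := by
      rw [abs_mul, abs_mul, abs_of_nonneg (sub_nonneg.2 hs1), abs_of_nonneg hs0]

lemma convexCombo_mem_Icc {lo hi x y s : ℝ} (hx : x ∈ Icc lo hi) (hy : y ∈ Icc lo hi)
    (hs0 : 0 ≤ s) (hs1 : s ≤ 1) : (1 - s) * x + s * y ∈ Icc lo hi := by
  simpa only [smul_eq_mul] using
    convex_Icc lo hi hx hy (sub_nonneg.2 hs1) hs0 (sub_add_cancel 1 s)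

lemma tsum_int_comp_sub_one {α : Type*} [AddCommMonoid α] [TopologicalSpace α] (f : ℤ → α) :
    ∑' j : ℤ, f (j - 1) = ∑' j : ℤ, f j :=
  (Equiv.subRight 1).tsum_eq f

lemma tsum_int_comp_add_one {α : Type*} [AddCommMonoid α] [TopologicalSpace α] (f : ℤ → α) :
    ∑' j : ℤ, f (j + 1) = ∑' j : ℤ, f j :=
  (Equiv.addRight 1).tsum_eq f

section Equilibrium

variable {lam : ℝ} {flux : ℝ → ℝ} {S : Set ℝ}

lemma hp_add_hm (hlam : lam ≠ 0) (ξ : ℝ) : hp lam flux ξ + hm lam flux ξ = ξ := by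
  unfold hp hm
  field_simp
  ring

lemma hp_sub_hp (a b : ℝ) :
    hp lam flux a - hp lam flux b = (lam * (a - b) + (flux a - flux b)) / (2 * lam) := by
  unfold hp
  ring

lemma hm_sub_hm (a b : ℝ) :
    hm lam flux a - hm lam flux b = (lam * (a - b) - (flux a - flux b)) / (2 * lam) := by
  unfold hm
  ring

lemma abs_hp_sub_add_abs_hm_sub (hlam : 0 < lam)
    (hlip : ∀ a ∈ S, ∀ b ∈ S, |flux a - flux b| ≤ lam * |a - b|) {a b : ℝ} (ha : a ∈ S)
    (hb : b ∈ S) :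
    |hp lam flux a - hp lam flux b| + |hm lam flux a - hm lam flux b| = |a - b| := by
  have hflux : |flux a - flux b| ≤ |lam * (a - b)| := by
    rw [abs_mul, abs_of_pos hlam]
    exact hlip a ha b hb
  rw [hp_sub_hp, hm_sub_hm, abs_div, abs_div, ← add_div, abs_add_add_abs_sub_of_abs_le hflux,
    abs_mul, abs_of_pos hlam, abs_of_pos (by positivity : (0 : ℝ) < 2 * lam)]
  field_simp

lemma abs_hp_sub_le (hlam : 0 < lam)
    (hlip : ∀ a ∈ S, ∀ b ∈ S, |flux a - flux b| ≤ lam * |a - b|) {a b : ℝ} (ha : a ∈ S)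
    (hb : b ∈ S) : |hp lam flux a - hp lam flux b| ≤ |a - b| :=
  (le_add_of_nonneg_right (abs_nonneg _)).trans_eq (abs_hp_sub_add_abs_hm_sub hlam hlip ha hb)

lemma abs_hm_sub_le (hlam : 0 < lam)
    (hlip : ∀ a ∈ S, ∀ b ∈ S, |flux a - flux b| ≤ lam * |a - b|) {a b : ℝ} (ha : a ∈ S)
    (hb : b ∈ S) : |hm lam flux a - hm lam flux b| ≤ |a - b| :=
  (le_add_of_nonneg_left (abs_nonneg _)).trans_eq (abs_hp_sub_add_abs_hm_sub hlam hlip ha hb)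

lemma monotoneOn_hp (hlam : 0 < lam)
    (hlip : ∀ a ∈ S, ∀ b ∈ S, |flux a - flux b| ≤ lam * |a - b|) :
    MonotoneOn (hp lam flux) S := by
  intro a ha b hb hab
  have h := (abs_le.mp (hlip b hb a ha)).1
  rw [abs_of_nonneg (sub_nonneg.2 hab)] at h
  unfold hp
  gcongr ?_ / _
  linarith

lemma monotoneOn_hm (hlam : 0 < lam)
    (hlip : ∀ a ∈ S, ∀ b ∈ S, |flux a - flux b| ≤ lam * |a - b|) :
    MonotoneOn (hm lam flux) S := by
  intro a ha b hb hab
  have h := (abs_le.mp (hlip b hb a ha)).2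
  rw [abs_of_nonneg (sub_nonneg.2 hab)] at h
  unfold hm
  gcongr ?_ / _
  linarith

end Equilibrium

structure IsD1Q2 (lam s : ℝ) (flux : ℝ → ℝ) (fp fm u : ℕ → ℤ → ℝ) : Prop where
  u_eq : ∀ n j, u n j = fp n j + fm n j
  fp_succ : ∀ n j, fp (n + 1) j = (1 - s) * fp n (j - 1) + s * hp lam flux (u n (j - 1))
  fm_succ : ∀ n j, fm (n + 1) j = (1 - s) * fm n (j + 1) + s * hm lam flux (u n (j + 1))

noncomputable def timeVariation (fp fm : ℕ → ℤ → ℝ) (n : ℕ) : ENNReal :=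
  ∑' j : ℤ, (ENNReal.ofReal |fp (n + 1) j - fp n j| + ENNReal.ofReal |fm (n + 1) j - fm n j|)

namespace IsD1Q2

variable {lam s α β : ℝ} {flux : ℝ → ℝ} {fp fm u : ℕ → ℤ → ℝ} {S : Set ℝ}

theorem mem_Icc (h : IsD1Q2 lam s flux fp fm u) (hs0 : 0 ≤ s) (hs1 : s ≤ 1) (hlam : 0 < lam)
    (hlip : ∀ a ∈ Icc α β, ∀ b ∈ Icc α β, |flux a - flux b| ≤ lam * |a - b|)
    (hinit : ∀ j, u 0 j ∈ Icc α β) (hinitp : ∀ j, fp 0 j = hp lam flux (u 0 j))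
    (hinitm : ∀ j, fm 0 j = hm lam flux (u 0 j)) (n : ℕ) (j : ℤ) : u n j ∈ Icc α β := by
  have hp_mem := (monotoneOn_hp hlam hlip).mapsTo_Icc
  have hm_mem := (monotoneOn_hm hlam hlip).mapsTo_Icc
  have u_mem : ∀ n j, fp n j ∈ Icc (hp lam flux α) (hp lam flux β) →
      fm n j ∈ Icc (hm lam flux α) (hm lam flux β) → u n j ∈ Icc α β := by
    intro n j hfp hfm
    rw [h.u_eq, ← hp_add_hm hlam.ne' α, ← hp_add_hm hlam.ne' β]
    exact ⟨add_le_add hfp.1 hfm.1, add_le_add hfp.2 hfm.2⟩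
  suffices key : ∀ n j, fp n j ∈ Icc (hp lam flux α) (hp lam flux β) ∧
      fm n j ∈ Icc (hm lam flux α) (hm lam flux β) from u_mem n j (key n j).1 (key n j).2
  intro n
  induction n with
  | zero => exact fun j => ⟨hinitp j ▸ hp_mem (hinit j), hinitm j ▸ hm_mem (hinit j)⟩
  | succ n ih =>
    have hu : ∀ j, u n j ∈ Icc α β := fun j => u_mem n j (ih j).1 (ih j).2
    intro j
    rw [h.fp_succ, h.fm_succ]
    exact ⟨convexCombo_mem_Icc (ih (j - 1)).1 (hp_mem (hu (j - 1))) hs0 hs1,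
      convexCombo_mem_Icc (ih (j + 1)).2 (hm_mem (hu (j + 1))) hs0 hs1⟩

theorem timeVariation_succ_le (h : IsD1Q2 lam s flux fp fm u) (hs0 : 0 ≤ s) (hs1 : s ≤ 1)
    (hlam : 0 < lam) (hlip : ∀ a ∈ S, ∀ b ∈ S, |flux a - flux b| ≤ lam * |a - b|)
    (hu : ∀ n j, u n j ∈ S) (n : ℕ) :
    timeVariation fp fm (n + 1) ≤ timeVariation fp fm n := by
  set X : ℤ → ENNReal := fun j => ENNReal.ofReal ((1 - s) * |fp (n + 1) j - fp n j|
    + s * |hp lam flux (u (n + 1) j) - hp lam flux (u n j)|)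
  set Y : ℤ → ENNReal := fun j => ENNReal.ofReal ((1 - s) * |fm (n + 1) j - fm n j|
    + s * |hm lam flux (u (n + 1) j) - hm lam flux (u n j)|)
  have hX : ∀ j, ENNReal.ofReal |fp (n + 2) j - fp (n + 1) j| ≤ X (j - 1) := fun j => by
    rw [h.fp_succ (n + 1) j, h.fp_succ n j]
    exact ENNReal.ofReal_le_ofReal (abs_convexCombo_sub_le hs0 hs1 _ _ _ _)
  have hY : ∀ j, ENNReal.ofReal |fm (n + 2) j - fm (n + 1) j| ≤ Y (j + 1) := fun j => by
    rw [h.fm_succ (n + 1) j, h.fm_succ n j]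
    exact ENNReal.ofReal_le_ofReal (abs_convexCombo_sub_le hs0 hs1 _ _ _ _)
  have hXY : ∀ j, X j + Y j ≤
      ENNReal.ofReal |fp (n + 1) j - fp n j| + ENNReal.ofReal |fm (n + 1) j - fm n j| := by
    intro j
    have hsplit : |hp lam flux (u (n + 1) j) - hp lam flux (u n j)|
        + |hm lam flux (u (n + 1) j) - hm lam flux (u n j)|
        ≤ |fp (n + 1) j - fp n j| + |fm (n + 1) j - fm n j| := by
      rw [abs_hp_sub_add_abs_hm_sub hlam hlip (hu _ j) (hu _ j), h.u_eq, h.u_eq,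
        add_sub_add_comm]
      exact abs_add_le _ _
    have hscaled := mul_le_mul_of_nonneg_left hsplit hs0
    rw [← ENNReal.ofReal_add (by positivity) (by positivity),
      ← ENNReal.ofReal_add (abs_nonneg _) (abs_nonneg _)]
    exact ENNReal.ofReal_le_ofReal (by linarith)
  calc timeVariation fp fm (n + 1) ≤ ∑' j : ℤ, (X (j - 1) + Y (j + 1)) :=
        ENNReal.tsum_le_tsum fun j => add_le_add (hX j) (hY j)
    _ = ∑' j : ℤ, (X j + Y j) := by
      rw [ENNReal.tsum_add, ENNReal.tsum_add, tsum_int_comp_sub_one X, tsum_int_comp_add_one Y]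
    _ ≤ timeVariation fp fm n := ENNReal.tsum_le_tsum hXY

theorem timeVariation_zero_le (h : IsD1Q2 lam s flux fp fm u) (hlam : 0 < lam)
    (hlip : ∀ a ∈ S, ∀ b ∈ S, |flux a - flux b| ≤ lam * |a - b|) (hinit : ∀ j, u 0 j ∈ S)
    (hinitp : ∀ j, fp 0 j = hp lam flux (u 0 j)) (hinitm : ∀ j, fm 0 j = hm lam flux (u 0 j)) :
    timeVariation fp fm 0 ≤ 2 * tvSeq (u 0) := by
  set T : ℤ → ENNReal := fun j => ENNReal.ofReal |u 0 (j + 1) - u 0 j|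
  have hbound : ∀ j, ENNReal.ofReal |fp 1 j - fp 0 j| + ENNReal.ofReal |fm 1 j - fm 0 j|
      ≤ T (j - 1) + T j := by
    intro j
    have hfp : fp 1 j - fp 0 j = hp lam flux (u 0 (j - 1)) - hp lam flux (u 0 j) := by
      rw [h.fp_succ, hinitp, hinitp]
      ring
    have hfm : fm 1 j - fm 0 j = hm lam flux (u 0 (j + 1)) - hm lam flux (u 0 j) := by
      rw [h.fm_succ, hinitm, hinitm]
      ring
    refine add_le_add (ENNReal.ofReal_le_ofReal ?_) (ENNReal.ofReal_le_ofReal ?_)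
    · rw [hfp, sub_add_cancel, abs_sub_comm (u 0 j)]
      exact abs_hp_sub_le hlam hlip (hinit _) (hinit _)
    · rw [hfm]
      exact abs_hm_sub_le hlam hlip (hinit _) (hinit _)
  calc timeVariation fp fm 0 ≤ ∑' j : ℤ, (T (j - 1) + T j) := ENNReal.tsum_le_tsum hbound
    _ = 2 * tvSeq (u 0) := by
      rw [ENNReal.tsum_add, tsum_int_comp_sub_one T, two_mul]
      rfl

end IsD1Q2

theorem stmt6_general (flux : ℝ → ℝ) (hflux : ContDiff ℝ 1 flux)
    (α β M lam s : ℝ) (hlampos : 0 < lam)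
    (hs : s ∈ Set.Ioc (0 : ℝ) 1)
    (hM : ∀ ξ ∈ Set.Icc α β, |deriv flux ξ| ≤ M) (hlam : M ≤ lam)
    (fp fm u : ℕ → ℤ → ℝ)
    (hu : ∀ n j, u n j = fp n j + fm n j)
    (hrecp : ∀ n j, fp (n + 1) j = (1 - s) * fp n (j - 1) + s * hp lam flux (u n (j - 1)))
    (hrecm : ∀ n j, fm (n + 1) j = (1 - s) * fm n (j + 1) + s * hm lam flux (u n (j + 1)))
    (hinit : ∀ j, u 0 j ∈ Set.Icc α β)
    (hinitp : ∀ j, fp 0 j = hp lam flux (u 0 j))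
    (hinitm : ∀ j, fm 0 j = hm lam flux (u 0 j)) :
    (∀ n : ℕ,
      (∑' j : ℤ, (ENNReal.ofReal |fp (n + 2) j - fp (n + 1) j|
          + ENNReal.ofReal |fm (n + 2) j - fm (n + 1) j|)) ≤
      (∑' j : ℤ, (ENNReal.ofReal |fp (n + 1) j - fp n j|
          + ENNReal.ofReal |fm (n + 1) j - fm n j|))) ∧
    (∀ n : ℕ,
      (∑' j : ℤ, (ENNReal.ofReal |fp (n + 1) j - fp n j|
          + ENNReal.ofReal |fm (n + 1) j - fm n j|)) ≤ 2 * tvSeq (u 0)) := by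
  obtain ⟨hs0, hs1⟩ := hs
  have hlip : ∀ a ∈ Icc α β, ∀ b ∈ Icc α β, |flux a - flux b| ≤ lam * |a - b| :=
    fun a ha b hb => (convex_Icc α β).norm_image_sub_le_of_norm_deriv_le
      (fun x _ => (hflux.differentiable one_ne_zero).differentiableAt)
      (fun x hx => (hM x hx).trans hlam) hb ha
  have h : IsD1Q2 lam s flux fp fm u := ⟨hu, hrecp, hrecm⟩
  have hmem := h.mem_Icc hs0.le hs1 hlampos hlip hinit hinitp hinitm
  have hanti : Antitone (timeVariation fp fm) :=
    antitone_nat_of_succ_le (h.timeVariation_succ_le hs0.le hs1 hlampos hlip hmem)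
  exact ⟨fun n => hanti n.le_succ,
    fun n => (hanti n.zero_le).trans (h.timeVariation_zero_le hlampos hlip hinit hinitp hinitm)⟩

/-- Total variation in time estimates for the D1Q2 scheme. -/
theorem stmt6 (flux : ℝ → ℝ) (hflux : ContDiff ℝ 1 flux)
    (α β M lam s : ℝ) (hαβ : α ≤ β) (hlampos : 0 < lam)
    (hs : s ∈ Set.Ioc (0 : ℝ) 1)
    (hM : ∀ ξ ∈ Set.Icc α β, |deriv flux ξ| ≤ M) (hlam : M ≤ lam)
    (fp fm u : ℕ → ℤ → ℝ)
    (hu : ∀ n j, u n j = fp n j + fm n j)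
    (hrecp : ∀ n j, fp (n + 1) j = (1 - s) * fp n (j - 1) + s * hp lam flux (u n (j - 1)))
    (hrecm : ∀ n j, fm (n + 1) j = (1 - s) * fm n (j + 1) + s * hm lam flux (u n (j + 1)))
    (hinit : ∀ j, u 0 j ∈ Set.Icc α β)
    (hTV0 : tvSeq (u 0) < ⊤)
    (hinitp : ∀ j, fp 0 j = hp lam flux (u 0 j))
    (hinitm : ∀ j, fm 0 j = hm lam flux (u 0 j)) :
    (∀ n : ℕ,
      (∑' j : ℤ, (ENNReal.ofReal |fp (n + 2) j - fp (n + 1) j|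
          + ENNReal.ofReal |fm (n + 2) j - fm (n + 1) j|)) ≤
      (∑' j : ℤ, (ENNReal.ofReal |fp (n + 1) j - fp n j|
          + ENNReal.ofReal |fm (n + 1) j - fm n j|))) ∧
    (∀ n : ℕ,
      (∑' j : ℤ, (ENNReal.ofReal |fp (n + 1) j - fp n j|
          + ENNReal.ofReal |fm (n + 1) j - fm n j|)) ≤ 2 * tvSeq (u 0)) :=
  stmt6_general flux hflux α β M lam s hlampos hs hM hlam fp fm u hu hrecp hrecm hinit hinitp hinitm
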